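/- arXiv:0811.0937 — 9 statements merged into one kernel-verified Lean document; each statement's English description precedes it below -/
import Mathlib

section
/- Let ω > 0 and q > p > 1 be real numbers, and let f(u) = -ωu + u^p - u^q. If there exists some u > 0 with F(u) > 0, where F(u) = -ωu²/2 + u^{p+1}/(p+1) - u^{q+1}/(q+1) is the antiderivative of f vanishing at 0, then for every u > 0 one has f̃(u) < 0, where f̃(u) = (f'(u) + u f''(u)) f(u) - u f'(u)², with f'(u) = -ω + p u^{p-1} - q u^{q-1} and f''(u) = p(p-1) u^{p-2} - q(q-1) u^{q-2}. -/
set_option maxHeartbeats 1000000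

/-- From the existence condition we get the sharp bound on ω. -/
private lemma omega_bound (ω p q : ℝ) (hω : 0 < ω) (hp : 1 < p) (hpq : p < q)
    (hF : ∃ u : ℝ, 0 < u ∧
      -ω * u ^ 2 / 2 + u ^ (p + 1) / (p + 1) - u ^ (q + 1) / (q + 1) > 0) :
    ω < (q - p) / (q - 1) * ((p - 1) / (q - 1)) ^ ((p - 1) / (q - p)) := by
  obtain ⟨v, hv, hFv⟩ := hF
  have hp1 : (0:ℝ) < p - 1 := by linarith
  have hq1 : (0:ℝ) < q - 1 := by linarith
  have hqp : (0:ℝ) < q - p := by linarith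
  have hpp1 : (0:ℝ) < p + 1 := by linarith
  have hqq1 : (0:ℝ) < q + 1 := by linarith
  set K := (p - 1) * (q + 1) / ((q - 1) * (p + 1)) with hKdef
  have hK : 0 < K := by positivity
  set s := K ^ ((q - 1) / (q - p)) with hsdef
  have hs : 0 < s := Real.rpow_pos_of_pos hK _
  have es : s ^ ((q - p) / (q - 1)) = K := by
    rw [hsdef, ← Real.rpow_mul hK.le]
    rw [show (q - 1) / (q - p) * ((q - p) / (q - 1)) = 1 by field_simp, Real.rpow_one]
  have esK : s / K = K ^ ((p - 1) / (q - p)) := by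
    have h4 : s / K = K ^ ((q - 1) / (q - p) - 1) := by
      rw [Real.rpow_sub hK, Real.rpow_one, hsdef]
    rw [h4]; congr 1; rw [div_sub_one hqp.ne']; ring
  have hcoef : (p - 1) / (q - 1) / (K * (p + 1)) = 1 / (q + 1) := by
    rw [hKdef]; field_simp
  have hKκ : K ^ ((p - 1) / (q - p))
      = ((p - 1) / (q - 1)) ^ ((p - 1) / (q - p)) * ((q + 1) / (p + 1)) ^ ((p - 1) / (q - p)) := by
    rw [← Real.mul_rpow (by positivity) (by positivity)]
    congr 1; rw [hKdef]; field_simp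
  set P := v ^ (p - 1) with hPdef
  set Q := v ^ (q - 1) with hQdef
  have hP : 0 < P := Real.rpow_pos_of_pos hv _
  have hQ : 0 < Q := Real.rpow_pos_of_pos hv _
  have hv2 : (0:ℝ) < v ^ 2 := by positivity
  have e1 : v ^ (p + 1) = P * v ^ 2 := by
    rw [hPdef, ← Real.rpow_natCast v 2, ← Real.rpow_add hv]; congr 1; push_cast; ring
  have e2 : v ^ (q + 1) = Q * v ^ 2 := by
    rw [hQdef, ← Real.rpow_natCast v 2, ← Real.rpow_add hv]; congr 1; push_cast; ring
  have eQ : Q ^ ((p - 1) / (q - 1)) = P := by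
    rw [hQdef, ← Real.rpow_mul hv.le, hPdef]
    congr 1; field_simp
  rw [e1, e2] at hFv
  clear_value P Q
  clear hPdef hQdef e1 e2
  have h1 : ω / 2 < P / (p + 1) - Q / (q + 1) := by
    have e3 : (P / (p + 1) - Q / (q + 1) - ω / 2) * v ^ 2
        = -ω * v ^ 2 / 2 + P * v ^ 2 / (p + 1) - Q * v ^ 2 / (q + 1) := by ring
    have h2 : 0 < (P / (p + 1) - Q / (q + 1) - ω / 2) * v ^ 2 := by rw [e3]; exact hFv
    nlinarith [h2, hv2, mul_pos h2 hv2]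
  -- AM-GM step
  have hw : (p - 1) / (q - 1) + (q - p) / (q - 1) = 1 := by field_simp; ring
  have amgm := Real.geom_mean_le_arith_mean2_weighted
    (by positivity : (0:ℝ) ≤ (p - 1) / (q - 1)) (by positivity : (0:ℝ) ≤ (q - p) / (q - 1))
    hQ.le hs.le hw
  rw [eQ, es] at amgm
  clear_value K s
  -- so P * K ≤ μ Q + λ s
  have hPK : P ≤ ((p - 1) / (q - 1) * Q + (q - p) / (q - 1) * s) / K := by
    rw [le_div_iff₀ hK]; linarith
  have h3 : ω / 2 < (q - p) / (q - 1) * s / (K * (p + 1)) := by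
    have hPb : P / (p + 1) ≤ ((p - 1) / (q - 1) * Q + (q - p) / (q - 1) * s) / (K * (p + 1)) := by
      rw [div_le_div_iff₀ hpp1 (by positivity)]
      calc P * (K * (p+1)) = P * K * (p+1) := by ring
        _ ≤ ((p - 1) / (q - 1) * Q + (q - p) / (q - 1) * s) * (p+1) := by
            apply mul_le_mul_of_nonneg_right _ hpp1.le
            calc P * K ≤ ((p - 1) / (q - 1) * Q + (q - p) / (q - 1) * s) / K * K :=
                  mul_le_mul_of_nonneg_right hPK hK.le
              _ = _ := div_mul_cancel₀ _ hK.ne'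
    have hsplit : ((p - 1) / (q - 1) * Q + (q - p) / (q - 1) * s) / (K * (p + 1))
        = (p - 1) / (q - 1) / (K * (p + 1)) * Q + (q - p) / (q - 1) * s / (K * (p + 1)) := by
      ring
    rw [hsplit, hcoef] at hPb
    have hQe : Q / (q + 1) = 1 / (q + 1) * Q := by ring
    linarith
  -- so ω < 2 λ K^κ / (p+1)
  have h5 : ω < 2 * ((q - p) / (q - 1)) * K ^ ((p - 1) / (q - p)) / (p + 1) := by
    rw [← esK]
    have he : 2 * ((q - p) / (q - 1)) * (s / K) / (p + 1)
        = 2 * ((q - p) / (q - 1) * s / (K * (p + 1))) := by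
      field_simp
    rw [he]; linarith
  -- step C : K^κ = R^κ * X^κ, X^κ ≤ (p+1)/2
  have hXpos : (0:ℝ) < (q + 1) / (p + 1) := by positivity
  have hXκ : ((q + 1) / (p + 1)) ^ ((p - 1) / (q - p)) ≤ (p + 1) / 2 := by
    have hlog1 : Real.log ((q + 1) / (p + 1)) ≤ (q - p) / (p + 1) := by
      have h := Real.log_le_sub_one_of_pos hXpos
      have e : (q + 1) / (p + 1) - 1 = (q - p) / (p + 1) := by
        rw [div_sub_one hpp1.ne']; ring
      linarith [e ▸ h]
    have hlog2 : (p - 1) / (p + 1) ≤ Real.log ((p + 1) / 2) := by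
      have h := Real.log_le_sub_one_of_pos (show (0:ℝ) < 2 / (p + 1) by positivity)
      have e : (2:ℝ) / (p + 1) = ((p + 1) / 2)⁻¹ := by
        rw [inv_div]
      rw [e, Real.log_inv] at h
      have e2 : ((p + 1) / 2)⁻¹ - 1 = -((p - 1) / (p + 1)) := by
        rw [inv_div, div_sub_one hpp1.ne']; ring_nf
      linarith [e2 ▸ h]
    have hκpos : (0:ℝ) < (p - 1) / (q - p) := by positivity
    rw [Real.rpow_def_of_pos hXpos]
    rw [← Real.exp_log (show (0:ℝ) < (p + 1) / 2 by positivity)]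
    apply Real.exp_le_exp.2
    calc Real.log ((q + 1) / (p + 1)) * ((p - 1) / (q - p))
        ≤ (q - p) / (p + 1) * ((p - 1) / (q - p)) :=
          mul_le_mul_of_nonneg_right hlog1 hκpos.le
      _ = (p - 1) / (p + 1) := by field_simp
      _ ≤ Real.log ((p + 1) / 2) := hlog2
  have hRκ : (0:ℝ) < ((p - 1) / (q - 1)) ^ ((p - 1) / (q - p)) :=
    Real.rpow_pos_of_pos (by positivity) _
  rw [hKκ] at h5
  have hlam : (0:ℝ) < (q - p) / (q - 1) := by positivity
  have hfinal : 2 * ((q - p) / (q - 1)) *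
      (((p - 1) / (q - 1)) ^ ((p - 1) / (q - p)) * ((q + 1) / (p + 1)) ^ ((p - 1) / (q - p)))
      / (p + 1) ≤ (q - p) / (q - 1) * ((p - 1) / (q - 1)) ^ ((p - 1) / (q - p)) := by
    rw [div_le_iff₀ hpp1]
    nlinarith [mul_le_mul_of_nonneg_left hXκ
      (mul_pos (mul_pos (by norm_num : (0:ℝ) < 2) hlam) hRκ).le]
  linarith



/-- For `f(u) = -ωu + u^p - u^q` with `ω > 0`, `q > p > 1`, if the
existence condition `F(u) > 0` for some `u > 0` holds, then the Ouyang–Shi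
condition `f̃(u) < 0` holds for every `u > 0`. Powers are real powers. -/
theorem existence_implies_uniqueness_condition
    (ω p q : ℝ) (hω : 0 < ω) (hp : 1 < p) (hpq : p < q)
    (hF : ∃ u : ℝ, 0 < u ∧
      -ω * u ^ 2 / 2 + u ^ (p + 1) / (p + 1) - u ^ (q + 1) / (q + 1) > 0) :
    ∀ u : ℝ, 0 < u →
      ((-ω + p * u ^ (p - 1) - q * u ^ (q - 1))
          + u * (p * (p - 1) * u ^ (p - 2) - q * (q - 1) * u ^ (q - 2)))
        * (-ω * u + u ^ p - u ^ q)
      - u * (-ω + p * u ^ (p - 1) - q * u ^ (q - 1)) ^ 2 < 0 := by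
  have hω2 := omega_bound ω p q hω hp hpq hF
  intro u hu
  have hp1 : (0:ℝ) < p - 1 := by linarith
  have hq1 : (0:ℝ) < q - 1 := by linarith
  have hqp : (0:ℝ) < q - p := by linarith
  set A := u ^ (p - 1) with hA
  set B := u ^ (q - 1) with hB
  have hApos : 0 < A := Real.rpow_pos_of_pos hu _
  have hBpos : 0 < B := Real.rpow_pos_of_pos hu _
  set C := u ^ (q - p) with hC
  have hCpos : 0 < C := Real.rpow_pos_of_pos hu _
  have e1 : u ^ p = A * u := by
    rw [hA, ← Real.rpow_add_one hu.ne']; congr 1; ring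
  have e2 : u ^ q = B * u := by
    rw [hB, ← Real.rpow_add_one hu.ne']; congr 1; ring
  have e3 : u ^ (p - 2) = A / u := by
    rw [hA, ← Real.rpow_sub_one hu.ne']; congr 1; ring
  have e4 : u ^ (q - 2) = B / u := by
    rw [hB, ← Real.rpow_sub_one hu.ne']; congr 1; ring
  have eBCA : B = C * A := by
    rw [hA, hB, hC, ← Real.rpow_add hu]; congr 1; ring
  -- the key pointwise inequality
  have hSpos : (0:ℝ) < ω * (q - 1) / (q - p) := by positivity
  set m := (ω * (q - 1) / (q - p)) ^ ((q - 1) / (p - 1)) with hm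
  have hmpos : 0 < m := Real.rpow_pos_of_pos hSpos _
  have hmμ : m ^ ((p - 1) / (q - 1)) = ω * (q - 1) / (q - p) := by
    rw [hm, ← Real.rpow_mul hSpos.le]
    rw [show (q - 1) / (p - 1) * ((p - 1) / (q - 1)) = 1 by field_simp, Real.rpow_one]
  have hmlam : m ^ ((q - p) / (q - 1)) = (ω * (q - 1) / (q - p)) ^ ((q - p) / (p - 1)) := by
    rw [hm, ← Real.rpow_mul hSpos.le]; congr 1; field_simp
  have hRpos : (0:ℝ) < (p - 1) / (q - 1) := by positivity
  have hmlamlt : m ^ ((q - p) / (q - 1)) < (p - 1) / (q - 1) := by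
    have hstep : ω * (q - 1) / (q - p) < ((p - 1) / (q - 1)) ^ ((p - 1) / (q - p)) := by
      rw [div_lt_iff₀ hqp]
      have h := mul_lt_mul_of_pos_right hω2 hq1
      calc ω * (q - 1) < (q - p) / (q - 1) * ((p - 1) / (q - 1)) ^ ((p - 1) / (q - p)) * (q - 1) := h
        _ = ((p - 1) / (q - 1)) ^ ((p - 1) / (q - p)) * (q - p) := by field_simp
    have h2 := Real.rpow_lt_rpow hSpos.le hstep (show (0:ℝ) < (q - p) / (p - 1) by positivity)
    rw [← Real.rpow_mul hRpos.le] at h2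
    rw [show (p - 1) / (q - p) * ((q - p) / (p - 1)) = 1 by field_simp, Real.rpow_one] at h2
    rw [hmlam]; exact h2
  -- AM-GM:  C / m^λ ≤ λ B/m + μ
  have hw2 : (q - p) / (q - 1) + (p - 1) / (q - 1) = 1 := by field_simp; ring
  have amgm := Real.geom_mean_le_arith_mean2_weighted
    (by positivity : (0:ℝ) ≤ (q - p) / (q - 1)) (by positivity : (0:ℝ) ≤ (p - 1) / (q - 1))
    (by positivity : (0:ℝ) ≤ B / m) (by norm_num : (0:ℝ) ≤ 1) hw2
  rw [Real.one_rpow, mul_one, mul_one, Real.div_rpow hBpos.le hmpos.le] at amgm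
  have eB : B ^ ((q - p) / (q - 1)) = C := by
    rw [hB, ← Real.rpow_mul hu.le, hC]; congr 1; field_simp
  rw [eB] at amgm
  -- C ≤ λ (m^λ/m) B + μ m^λ
  have hmlampos : 0 < m ^ ((q - p) / (q - 1)) := Real.rpow_pos_of_pos hmpos _
  have hC2 : C ≤ (q - p) / (q - 1) * (m ^ ((q - p) / (q - 1)) / m) * B
      + (p - 1) / (q - 1) * m ^ ((q - p) / (q - 1)) := by
    have h3 := mul_le_mul_of_nonneg_left amgm hmlampos.le
    rw [mul_div_assoc'] at h3
    rw [mul_div_cancel_left₀ _ hmlampos.ne'] at h3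
    calc C ≤ m ^ ((q - p) / (q - 1)) * ((q - p) / (q - 1) * (B / m) + (p - 1) / (q - 1)) := h3
      _ = (q - p) / (q - 1) * (m ^ ((q - p) / (q - 1)) / m) * B
          + (p - 1) / (q - 1) * m ^ ((q - p) / (q - 1)) := by ring
  have hinv : m ^ ((q - p) / (q - 1)) / m = (q - p) / (ω * (q - 1)) := by
    have h4 : m ^ ((q - p) / (q - 1)) / m = m ^ ((q - p) / (q - 1) - 1) := by
      rw [Real.rpow_sub hmpos, Real.rpow_one]
    rw [h4, show (q - p) / (q - 1) - 1 = -((p - 1) / (q - 1)) by rw [div_sub_one hq1.ne']; ring]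
    rw [Real.rpow_neg hmpos.le, hmμ, inv_div]
  rw [hinv] at hC2
  have key : ω * (q - 1) ^ 2 * C < (q - p) ^ 2 * B + ω * (p - 1) ^ 2 := by
    have hpos2 : (0:ℝ) < ω * (q - 1) ^ 2 := by positivity
    have hkey1 : ω * (q - 1) ^ 2 * ((q - p) / (q - 1) * ((q - p) / (ω * (q - 1)))) = (q - p) ^ 2 := by
      field_simp
    have hkey2 : ω * (q - 1) ^ 2 * ((p - 1) / (q - 1)) = ω * (q - 1) * (p - 1) := by
      field_simp
    calc ω * (q - 1) ^ 2 * C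
        ≤ ω * (q - 1) ^ 2 * ((q - p) / (q - 1) * ((q - p) / (ω * (q - 1))) * B
            + (p - 1) / (q - 1) * m ^ ((q - p) / (q - 1))) :=
          mul_le_mul_of_nonneg_left hC2 hpos2.le
      _ = (ω * (q - 1) ^ 2 * ((q - p) / (q - 1) * ((q - p) / (ω * (q - 1))))) * B
          + (ω * (q - 1) ^ 2 * ((p - 1) / (q - 1))) * m ^ ((q - p) / (q - 1)) := by ring
      _ = (q - p) ^ 2 * B + (ω * (q - 1) * (p - 1)) * m ^ ((q - p) / (q - 1)) := by
          rw [hkey1, hkey2]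
      _ < (q - p) ^ 2 * B + ω * (p - 1) ^ 2 := by
          have h5 := mul_lt_mul_of_pos_left hmlamlt (show (0:ℝ) < ω * (q - 1) * (p - 1) by positivity)
          have e5 : ω * (q - 1) * (p - 1) * ((p - 1) / (q - 1)) = ω * (p - 1) ^ 2 := by
            field_simp
          linarith [e5 ▸ h5]
  -- multiply key by A and use B = C A
  have hfin : -(ω * (p - 1) ^ 2 * A) + ω * (q - 1) ^ 2 * B - (q - p) ^ 2 * (A * B) < 0 := by
    have h6 := mul_lt_mul_of_pos_right key hApos
    rw [eBCA] at h6 ⊢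
    nlinarith [h6]
  rw [e1, e2, e3, e4]
  have main_eq : (-ω + p * A - q * B + u * (p * (p - 1) * (A / u) - q * (q - 1) * (B / u)))
        * (-ω * u + A * u - B * u) - u * (-ω + p * A - q * B) ^ 2
      = (-(ω * (p - 1) ^ 2 * A) + ω * (q - 1) ^ 2 * B - (q - p) ^ 2 * (A * B)) * u := by
    field_simp
    ring
  rw [main_eq]
  exact mul_neg_of_neg_of_pos hfin hu
end

section
/- Let ω > 0 and q > p > 1 be real numbers, and let F(u) = -ωu²/2 + u^{p+1}/(p+1) - u^{q+1}/(q+1) for u > 0. Then there exists u > 0 with F(u) > 0 if and only if ω < ω_{p,q}, where ω_{p,q} = (2(q-p)/((p+1)(q-1))) · [((p-1)(q+1))/((p+1)(q-1))]^{(p-1)/(q-p)}. -/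
open Real

theorem key_ineq (p q : ℝ) (hp : 1 < p) (hpq : p < q) (x : ℝ) (hx : 0 < x) :
    x / (p+1) - x ^ ((q-1)/(p-1)) / (q+1)
      ≤ (q-p) / ((p+1)*(q-1))
        * (((p-1)*(q+1)) / ((p+1)*(q-1))) ^ ((p-1)/(q-p)) := by
  have hp1 : (0:ℝ) < p - 1 := by linarith
  have hq1 : (0:ℝ) < q - 1 := by linarith
  have hd : (0:ℝ) < q - p := by linarith
  have hp1' : (0:ℝ) < p + 1 := by linarith
  have hq1' : (0:ℝ) < q + 1 := by linarith
  set A : ℝ := ((p-1)*(q+1)) / ((p+1)*(q-1)) with hA_def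
  have hA : 0 < A := by positivity
  set r : ℝ := (q-1)/(p-1) with hr_def
  have hr : 1 ≤ r := by
    rw [hr_def, le_div_iff₀ hp1]; linarith
  set c : ℝ := A ^ ((p-1)/(q-p)) with hc_def
  have hc : 0 < c := rpow_pos_of_pos hA _
  have hcr : c ^ r = A * c := by
    rw [hc_def, ← rpow_mul hA.le]
    have h1 : (p-1)/(q-p) * r = (p-1)/(q-p) + 1 := by
      rw [hr_def]; field_simp; ring
    rw [h1, rpow_add hA, rpow_one]; ring
  set y : ℝ := x / c with hy_def
  have hy : 0 < y := div_pos hx hc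
  have hxy : x = c * y := by rw [hy_def]; field_simp
  have hbern : 1 + r * (y - 1) ≤ y ^ r := by
    have := one_add_mul_self_le_rpow_one_add (s := y - 1) (by linarith) hr
    simpa using this
  have hxr : x ^ r = A * c * y ^ r := by
    rw [hxy, mul_rpow hc.le hy.le, hcr]
  rw [hxr, hxy]
  have hstep : c * y / (p+1) - A * c * y ^ r / (q+1)
      ≤ c * y / (p+1) - A * c * (1 + r * (y - 1)) / (q+1) := by
    have h2 : A * c * (1 + r * (y - 1)) ≤ A * c * y ^ r :=
      mul_le_mul_of_nonneg_left hbern (by positivity)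
    exact sub_le_sub_left (div_le_div_of_nonneg_right h2 hq1'.le) _
  refine hstep.trans ?_
  have hid : c * y / (p+1) - A * c * (1 + r * (y - 1)) / (q+1)
      = (q-p) / ((p+1)*(q-1)) * c := by
    rw [hA_def, hr_def]; field_simp; ring
  rw [hid]

theorem key_eq (p q : ℝ) (hp : 1 < p) (hpq : p < q) :
    (((p-1)*(q+1)) / ((p+1)*(q-1))) ^ ((p-1)/(q-p)) / (p+1)
      - ((((p-1)*(q+1)) / ((p+1)*(q-1))) ^ ((p-1)/(q-p))) ^ ((q-1)/(p-1)) / (q+1)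
      = (q-p) / ((p+1)*(q-1)) * (((p-1)*(q+1)) / ((p+1)*(q-1))) ^ ((p-1)/(q-p)) := by
  have hp1 : (0:ℝ) < p - 1 := by linarith
  have hq1 : (0:ℝ) < q - 1 := by linarith
  have hd : (0:ℝ) < q - p := by linarith
  have hp1' : (0:ℝ) < p + 1 := by linarith
  have hq1' : (0:ℝ) < q + 1 := by linarith
  set A : ℝ := ((p-1)*(q+1)) / ((p+1)*(q-1)) with hA_def
  have hA : 0 < A := by positivity
  set c : ℝ := A ^ ((p-1)/(q-p)) with hc_def
  have hc : 0 < c := rpow_pos_of_pos hA _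
  have hcr : c ^ ((q-1)/(p-1)) = A * c := by
    rw [hc_def, ← rpow_mul hA.le]
    have h1 : (p-1)/(q-p) * ((q-1)/(p-1)) = (p-1)/(q-p) + 1 := by
      field_simp; ring
    rw [h1, rpow_add hA, rpow_one]; ring
  rw [hcr, hA_def]
  field_simp
  ring

/-- `F(u) > 0` for some `u > 0` iff `ω < ω_{p,q}`. -/
theorem existence_condition_iff
    (ω p q : ℝ) (hω : 0 < ω) (hp : 1 < p) (hpq : p < q) :
    (∃ u : ℝ, 0 < u ∧
      -ω * u ^ 2 / 2 + u ^ (p + 1) / (p + 1) - u ^ (q + 1) / (q + 1) > 0)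
    ↔ ω < (2 * (q - p) / ((p + 1) * (q - 1)))
        * (((p - 1) * (q + 1)) / ((p + 1) * (q - 1))) ^ ((p - 1) / (q - p)) := by
  have hp1 : (0:ℝ) < p - 1 := by linarith
  have hq1 : (0:ℝ) < q - 1 := by linarith
  have hd : (0:ℝ) < q - p := by linarith
  have hp1' : (0:ℝ) < p + 1 := by linarith
  have hq1'' : (0:ℝ) < q + 1 := by linarith
  set A : ℝ := ((p-1)*(q+1)) / ((p+1)*(q-1)) with hA_def
  have hA : 0 < A := by positivity
  set c : ℝ := A ^ ((p-1)/(q-p)) with hc_def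
  have hc : 0 < c := rpow_pos_of_pos hA _
  -- rewrite F(u)
  have hF : ∀ u : ℝ, 0 < u →
      -ω * u ^ 2 / 2 + u ^ (p + 1) / (p + 1) - u ^ (q + 1) / (q + 1)
      = u ^ 2 * (u ^ (p-1) / (p+1) - u ^ (q-1) / (q+1) - ω / 2) := by
    intro u hu
    have h2' : u ^ ((2:ℕ):ℝ) = u ^ (2:ℕ) := rpow_natCast u 2
    have h1 : u ^ (p+1) = u ^ 2 * u ^ (p-1) := by
      rw [show p + 1 = 2 + (p-1) by ring, rpow_add hu, ← h2']; norm_num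
    have h2 : u ^ (q+1) = u ^ 2 * u ^ (q-1) := by
      rw [show q + 1 = 2 + (q-1) by ring, rpow_add hu, ← h2']; norm_num
    rw [h1, h2]; ring
  have hrw : ∀ u : ℝ, 0 < u → (u ^ (p-1)) ^ ((q-1)/(p-1)) = u ^ (q-1) := by
    intro u hu
    rw [← rpow_mul hu.le]
    congr 1
    field_simp
  have hRHS : (2 * (q - p) / ((p + 1) * (q - 1))) * A ^ ((p - 1) / (q - p))
      = 2 * ((q-p) / ((p+1)*(q-1)) * c) := by
    rw [hc_def]; ring
  rw [hRHS]
  constructor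
  · rintro ⟨u, hu, hFu⟩
    rw [hF u hu] at hFu
    have hu2 : 0 < u ^ 2 := by positivity
    have ht : 0 < u ^ (p-1) / (p+1) - u ^ (q-1) / (q+1) - ω / 2 := by
      by_contra h
      push_neg at h
      nlinarith
    have hx : 0 < u ^ (p-1) := rpow_pos_of_pos hu _
    have hkey := key_ineq p q hp hpq (u ^ (p-1)) hx
    rw [hrw u hu] at hkey
    rw [← hc_def] at hkey
    linarith
  · intro hω2
    refine ⟨A ^ (1/(q-p)), rpow_pos_of_pos hA _, ?_⟩
    set u : ℝ := A ^ (1/(q-p)) with hu_def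
    have hu : 0 < u := rpow_pos_of_pos hA _
    have hup : u ^ (p-1) = c := by
      rw [hu_def, hc_def, ← rpow_mul hA.le]
      congr 1
      ring
    rw [hF u hu]
    have heq := key_eq p q hp hpq
    rw [← hA_def, ← hc_def] at heq
    have hq1' : u ^ (q-1) = c ^ ((q-1)/(p-1)) := by
      rw [← hrw u hu, hup]
    rw [hup, hq1', heq]
    have hu2 : 0 < u ^ 2 := by positivity
    nlinarith
end

section
/- Let ω > 0 and q > p > 1 be real numbers, and let f(u) = -ωu + u^p - u^q for u > 0, with f'(u) = -ω + p u^{p-1} - q u^{q-1} and f''(u) = p(p-1) u^{p-2} - q(q-1) u^{q-2}. Define f̃(u) = (f'(u) + u f''(u)) f(u) - u f'(u)². Then f̃(u) < 0 for all u > 0 if and only if ω < η_{p,q}, where η_{p,q} = ((q-p)/(q-1)) · [(p-1)/(q-1)]^{(p-1)/(q-p)}. -/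
open Real

private lemma amgm_aux {θ y : ℝ} (hθ : 0 < θ) (hy : 0 < y) :
    y ^ θ * (θ + 1 - θ * y) ≤ 1 := by
  have h1 : (0:ℝ) < θ + 1 := by linarith
  have key := Real.geom_mean_le_arith_mean2_weighted
    (w₁ := θ/(θ+1)) (w₂ := 1/(θ+1)) (p₁ := y^(θ+1)) (p₂ := 1)
    (by positivity) (by positivity) (by positivity) zero_le_one (by field_simp)
  have e1 : (y^(θ+1)) ^ (θ/(θ+1)) = y ^ θ := by
    rw [← Real.rpow_mul hy.le]
    congr 1
    field_simp
  rw [e1, Real.one_rpow, mul_one, mul_one] at key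
  have e2 : y ^ θ * y = y ^ (θ+1) := by
    rw [Real.rpow_add hy, Real.rpow_one]
  have key2 := mul_le_mul_of_nonneg_left key h1.le
  field_simp at key2
  nlinarith [key2, e2]

private lemma factor_aux (ω p q u : ℝ) (hu : 0 < u) :
    ((-ω + p * u ^ (p - 1) - q * u ^ (q - 1))
          + u * (p * (p - 1) * u ^ (p - 2) - q * (q - 1) * u ^ (q - 2)))
        * (-ω * u + u ^ p - u ^ q)
      - u * (-ω + p * u ^ (p - 1) - q * u ^ (q - 1)) ^ 2
    = u * u ^ (p - 1) * (ω * (q - 1) ^ 2 * u ^ (q - p)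
        - (q - p) ^ 2 * u ^ (q - 1) - ω * (p - 1) ^ 2) := by
  have hu' := hu.ne'
  have hA : u ^ (p - 1) = u ^ (p - 2) * u := by
    rw [← Real.rpow_add_one hu' (p - 2)]; ring_nf
  have hB : u ^ (q - 1) = u ^ (q - 2) * u := by
    rw [← Real.rpow_add_one hu' (q - 2)]; ring_nf
  have hP : u ^ p = u ^ (p - 1) * u := by
    rw [← Real.rpow_add_one hu' (p - 1)]; ring_nf
  have hQ : u ^ q = u ^ (q - 1) * u := by
    rw [← Real.rpow_add_one hu' (q - 1)]; ring_nf
  have hR : u ^ (q - 1) = u ^ (q - p) * u ^ (p - 1) := by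
    rw [← Real.rpow_add hu]; ring_nf
  set A := u ^ (p - 1)
  set B := u ^ (q - 1)
  set C := u ^ (p - 2)
  set D := u ^ (q - 2)
  set P := u ^ p
  set Q := u ^ q
  set R := u ^ (q - p)
  linear_combination
    ((-ω + p * A - q * B) + u * (p * (p-1) * C - q * (q-1) * D)) * hP
    - ((-ω + p * A - q * B) + u * (p * (p-1) * C - q * (q-1) * D)) * hQ
    - u * (-ω + A - B) * p * (p-1) * hA
    + u * (-ω + A - B) * q * (q-1) * hB
    + u * ω * (q-1)^2 * hR

private lemma key_bound (ω p q x : ℝ) (hω : 0 < ω) (hp : 1 < p) (hpq : p < q) (hx : 0 < x) :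
    ω * (q-1)^2 * x ^ ((q-p)/(p-1)) - (q-p)^2 * x ^ ((q-p)/(p-1) + 1)
      ≤ (p-1) * ω * (q-1) * (ω*(q-1)/(q-p)) ^ ((q-p)/(p-1)) := by
  have hp1 : (0:ℝ) < p - 1 := by linarith
  have hq1 : (0:ℝ) < q - 1 := by linarith
  have hqp : (0:ℝ) < q - p := by linarith
  set θ := (q-p)/(p-1) with hθdef
  have hθ : 0 < θ := div_pos hqp hp1
  set xs := ω*(q-1)/(q-p) with hxsdef
  have hxs : 0 < xs := div_pos (mul_pos hω hq1) hqp
  have hy : 0 < x / xs := div_pos hx hxs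
  have am := amgm_aux hθ hy
  have hb : 0 < xs ^ θ := Real.rpow_pos_of_pos hxs θ
  rw [Real.div_rpow hx.le hxs.le] at am
  have am2 : x ^ θ * (θ + 1 - θ * (x / xs)) ≤ xs ^ θ := by
    rw [div_mul_eq_mul_div, div_le_one hb] at am
    exact am
  have am3 : x ^ θ * ((θ+1) * xs - θ * x) ≤ xs ^ θ * xs := by
    have h := mul_le_mul_of_nonneg_right am2 hxs.le
    have e : x ^ θ * (θ + 1 - θ * (x / xs)) * xs = x ^ θ * ((θ+1) * xs - θ * x) := by
      field_simp
    rw [e] at h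
    exact h
  have hxθ1 : x ^ (θ + 1) = x ^ θ * x := by
    rw [Real.rpow_add_one hx.ne']
  have hid : ω * (q-1)^2 * x ^ θ - (q-p)^2 * x ^ (θ+1)
      = (q-p) * (p-1) * (x ^ θ * ((θ+1) * xs - θ * x)) := by
    rw [hxθ1, hxsdef, hθdef]
    field_simp
    ring
  have hid2 : (p-1) * ω * (q-1) * xs ^ θ = (q-p) * (p-1) * (xs ^ θ * xs) := by
    rw [hxsdef]
    field_simp
  rw [hid, hid2]
  exact mul_le_mul_of_nonneg_left am3 (by positivity)

private lemma crit_eq (ω p q : ℝ) (hω : 0 < ω) (hp : 1 < p) (hpq : p < q) :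
    ω * (q-1)^2 * (ω*(q-1)/(q-p)) ^ ((q-p)/(p-1))
        - (q-p)^2 * (ω*(q-1)/(q-p)) ^ ((q-p)/(p-1) + 1)
      = (p-1) * ω * (q-1) * (ω*(q-1)/(q-p)) ^ ((q-p)/(p-1)) := by
  have hq1 : (0:ℝ) < q - 1 := by linarith
  have hqp : (0:ℝ) < q - p := by linarith
  have hxs : 0 < ω*(q-1)/(q-p) := div_pos (mul_pos hω hq1) hqp
  rw [Real.rpow_add_one hxs.ne']
  field_simp
  ring

private lemma comp_iff (ω p q : ℝ) (hω : 0 < ω) (hp : 1 < p) (hpq : p < q) :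
    (p-1) * ω * (q-1) * (ω*(q-1)/(q-p)) ^ ((q-p)/(p-1)) < ω * (p-1)^2
      ↔ ω < ((q - p) / (q - 1)) * ((p - 1) / (q - 1)) ^ ((p - 1) / (q - p)) := by
  have hp1 : (0:ℝ) < p - 1 := by linarith
  have hq1 : (0:ℝ) < q - 1 := by linarith
  have hqp : (0:ℝ) < q - p := by linarith
  have hθ : 0 < (q-p)/(p-1) := div_pos hqp hp1
  have hxs : 0 < ω*(q-1)/(q-p) := div_pos (mul_pos hω hq1) hqp
  have hbase : (0:ℝ) < (p-1)/(q-1) := div_pos hp1 hq1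
  set M := ((p - 1) / (q - 1)) ^ ((p - 1) / (q - p)) with hMdef
  have hM : 0 < M := Real.rpow_pos_of_pos hbase _
  have hMθ : M ^ ((q-p)/(p-1)) = (p-1)/(q-1) := by
    rw [hMdef, ← Real.rpow_mul hbase.le]
    have : (p-1)/(q-p) * ((q-p)/(p-1)) = 1 := by field_simp
    rw [this, Real.rpow_one]
  have core : (ω*(q-1)/(q-p)) ^ ((q-p)/(p-1)) < (p-1)/(q-1)
      ↔ ω < (q-p)/(q-1) * M := by
    rw [← hMθ, Real.rpow_lt_rpow_iff hxs.le hM.le hθ, div_lt_iff₀ hqp,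
      div_mul_eq_mul_div, lt_div_iff₀ hq1]
    constructor <;> intro h <;> linarith
  constructor
  · intro h
    rw [← core]
    have hKq : (ω*(q-1)/(q-p)) ^ ((q-p)/(p-1)) * (q-1) < p - 1 := by
      nlinarith [mul_pos hω hp1]
    rw [lt_div_iff₀ hq1]
    exact hKq
  · intro h
    rw [← core, lt_div_iff₀ hq1] at h
    nlinarith [mul_pos hω hp1]

/-- `f̃(u) < 0` for all `u > 0` iff `ω < η_{p,q}`. -/
theorem uniqueness_condition_iff
    (ω p q : ℝ) (hω : 0 < ω) (hp : 1 < p) (hpq : p < q) :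
    (∀ u : ℝ, 0 < u →
      ((-ω + p * u ^ (p - 1) - q * u ^ (q - 1))
          + u * (p * (p - 1) * u ^ (p - 2) - q * (q - 1) * u ^ (q - 2)))
        * (-ω * u + u ^ p - u ^ q)
      - u * (-ω + p * u ^ (p - 1) - q * u ^ (q - 1)) ^ 2 < 0)
    ↔ ω < ((q - p) / (q - 1)) * ((p - 1) / (q - 1)) ^ ((p - 1) / (q - p)) := by
  have hp1 : (0:ℝ) < p - 1 := by linarith
  have hq1 : (0:ℝ) < q - 1 := by linarith
  have hqp : (0:ℝ) < q - p := by linarith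
  have hθ : 0 < (q-p)/(p-1) := div_pos hqp hp1
  have hxs : 0 < ω*(q-1)/(q-p) := div_pos (mul_pos hω hq1) hqp
  -- pointwise reformulation
  have hiff1 : (∀ u : ℝ, 0 < u →
      ((-ω + p * u ^ (p - 1) - q * u ^ (q - 1))
          + u * (p * (p - 1) * u ^ (p - 2) - q * (q - 1) * u ^ (q - 2)))
        * (-ω * u + u ^ p - u ^ q)
      - u * (-ω + p * u ^ (p - 1) - q * u ^ (q - 1)) ^ 2 < 0)
      ↔ (∀ u : ℝ, 0 < u →
        ω * (q-1)^2 * u ^ (q-p) - (q-p)^2 * u ^ (q-1) < ω * (p-1)^2) := by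
    refine forall₂_congr (fun u hu => ?_)
    rw [factor_aux ω p q u hu]
    have hpos : 0 < u * u ^ (p-1) := mul_pos hu (Real.rpow_pos_of_pos hu _)
    constructor
    · intro h
      nlinarith [hpos]
    · intro h
      nlinarith [hpos]
  rw [hiff1]
  constructor
  · intro H
    rw [← comp_iff ω p q hω hp hpq, ← crit_eq ω p q hω hp hpq]
    have hu : 0 < (ω*(q-1)/(q-p)) ^ ((p-1)⁻¹) := Real.rpow_pos_of_pos hxs _
    have h1 : ((ω*(q-1)/(q-p)) ^ ((p-1)⁻¹)) ^ (q - p) = (ω*(q-1)/(q-p)) ^ ((q-p)/(p-1)) := by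
      rw [← Real.rpow_mul hxs.le]
      congr 1
      field_simp
    have h2 : ((ω*(q-1)/(q-p)) ^ ((p-1)⁻¹)) ^ (q - 1) = (ω*(q-1)/(q-p)) ^ ((q-p)/(p-1) + 1) := by
      rw [← Real.rpow_mul hxs.le]
      congr 1
      field_simp
      ring
    have := H _ hu
    rw [h1, h2] at this
    exact this
  · intro H u hu
    have hx : 0 < u ^ (p-1) := Real.rpow_pos_of_pos hu _
    have h1 : u ^ (q - p) = (u ^ (p-1)) ^ ((q-p)/(p-1)) := by
      rw [← Real.rpow_mul hu.le]
      congr 1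
      field_simp
    have h2 : u ^ (q - 1) = (u ^ (p-1)) ^ ((q-p)/(p-1) + 1) := by
      rw [← Real.rpow_mul hu.le]
      congr 1
      field_simp
      ring
    rw [h1, h2]
    calc ω * (q-1)^2 * (u ^ (p-1)) ^ ((q-p)/(p-1))
          - (q-p)^2 * (u ^ (p-1)) ^ ((q-p)/(p-1) + 1)
        ≤ (p-1) * ω * (q-1) * (ω*(q-1)/(q-p)) ^ ((q-p)/(p-1)) :=
          key_bound ω p q _ hω hp hpq hx
      _ < ω * (p-1)^2 := (comp_iff ω p q hω hp hpq).mpr H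
end

section
/- Let q > p > 1 be real numbers. Then 0 < ω_{p,q} < η_{p,q}, where ω_{p,q} = (2(q-p)/((p+1)(q-1))) · [((p-1)(q+1))/((p+1)(q-1))]^{(p-1)/(q-p)} and η_{p,q} = ((q-p)/(q-1)) · [(p-1)/(q-1)]^{(p-1)/(q-p)}. -/
/-- `0 < ω_{p,q} < η_{p,q}` for `q > p > 1`. -/
theorem omega_pos_lt_eta
    (p q : ℝ) (hp : 1 < p) (hpq : p < q) :
    0 < (2 * (q - p) / ((p + 1) * (q - 1)))
        * (((p - 1) * (q + 1)) / ((p + 1) * (q - 1))) ^ ((p - 1) / (q - p))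
    ∧ (2 * (q - p) / ((p + 1) * (q - 1)))
        * (((p - 1) * (q + 1)) / ((p + 1) * (q - 1))) ^ ((p - 1) / (q - p))
      < ((q - p) / (q - 1)) * ((p - 1) / (q - 1)) ^ ((p - 1) / (q - p)) := by
  have hp1 : (0:ℝ) < p - 1 := by linarith
  have hqp : (0:ℝ) < q - p := by linarith
  have hq1 : (0:ℝ) < q - 1 := by linarith
  have hp1' : (0:ℝ) < p + 1 := by linarith
  have hq1' : (0:ℝ) < q + 1 := by linarith
  set e : ℝ := (p - 1) / (q - p) with he_def
  have he : 0 < e := div_pos hp1 hqp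
  have hbη : (0:ℝ) < (p - 1) / (q - 1) := div_pos hp1 hq1
  have hbr : (0:ℝ) < (q + 1) / (p + 1) := div_pos hq1' hp1'
  -- log estimates
  have hlog1 : Real.log ((q + 1) / (p + 1)) ≤ (q - p) / (p + 1) := by
    have h := Real.log_le_sub_one_of_pos hbr
    have h2 : (q + 1) / (p + 1) - 1 = (q - p) / (p + 1) := by
      field_simp
      ring
    linarith
  have hlog2 : (p - 1) / (p + 1) < Real.log ((p + 1) / 2) := by
    have hpos : (0:ℝ) < 2 / (p + 1) := by positivity
    have hne : 2 / (p + 1) ≠ 1 := by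
      intro h
      have : (2:ℝ) = p + 1 := by
        field_simp at h; linarith
      linarith
    have h := Real.log_lt_sub_one_of_pos hpos hne
    have hrec : Real.log (2 / (p + 1)) = - Real.log ((p + 1) / 2) := by
      rw [← Real.log_inv]
      congr 1
      rw [inv_div]
    have h2 : 2 / (p + 1) - 1 = -((p - 1) / (p + 1)) := by
      field_simp
      ring
    rw [hrec, h2] at h
    linarith
  have hmul : Real.log ((q + 1) / (p + 1)) * e < Real.log ((p + 1) / 2) := by
    have h1 : Real.log ((q + 1) / (p + 1)) * e ≤ (q - p) / (p + 1) * e :=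
      mul_le_mul_of_nonneg_right hlog1 he.le
    have h2 : (q - p) / (p + 1) * e = (p - 1) / (p + 1) := by
      rw [he_def]
      field_simp
    linarith
  have hkey : ((q + 1) / (p + 1)) ^ e < (p + 1) / 2 := by
    rw [Real.rpow_def_of_pos hbr]
    calc Real.exp (Real.log ((q + 1) / (p + 1)) * e)
        < Real.exp (Real.log ((p + 1) / 2)) := Real.exp_lt_exp.mpr hmul
      _ = (p + 1) / 2 := Real.exp_log (by positivity)
  -- rewrite ω
  have hbω_eq : ((p - 1) * (q + 1)) / ((p + 1) * (q - 1))
      = ((p - 1) / (q - 1)) * ((q + 1) / (p + 1)) := by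
    field_simp
  have hωeq : (2 * (q - p) / ((p + 1) * (q - 1)))
      * (((p - 1) * (q + 1)) / ((p + 1) * (q - 1))) ^ e
      = ((q - p) / (q - 1)) * ((p - 1) / (q - 1)) ^ e
        * (2 / (p + 1) * ((q + 1) / (p + 1)) ^ e) := by
    rw [hbω_eq, Real.mul_rpow hbη.le hbr.le]
    field_simp
  constructor
  · rw [hωeq]
    positivity
  · rw [hωeq]
    have hlt : 2 / (p + 1) * ((q + 1) / (p + 1)) ^ e < 1 := by
      have h := mul_lt_mul_of_pos_left hkey (show (0:ℝ) < 2 / (p + 1) by positivity)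
      have h2 : 2 / (p + 1) * ((p + 1) / 2) = 1 := by
        field_simp
      linarith
    have hpos : (0:ℝ) < (q - p) / (q - 1) * ((p - 1) / (q - 1)) ^ e := by positivity
    calc ((q - p) / (q - 1)) * ((p - 1) / (q - 1)) ^ e
        * (2 / (p + 1) * ((q + 1) / (p + 1)) ^ e)
        < ((q - p) / (q - 1)) * ((p - 1) / (q - 1)) ^ e * 1 :=
          mul_lt_mul_of_pos_left hlt hpos
      _ = ((q - p) / (q - 1)) * ((p - 1) / (q - 1)) ^ e := mul_one _
end

section
/- Let ω > 0 and q > p > 1 be real numbers with ω < ω_{p,q}, where ω_{p,q} = (2(q-p)/((p+1)(q-1))) · [((p-1)(q+1))/((p+1)(q-1))]^{(p-1)/(q-p)}. Then at the point u* = [((p-1)(q+1))/((p+1)(q-1))]^{1/(q-p)} one has F(u*) > 0, where F(u) = -ωu²/2 + u^{p+1}/(p+1) - u^{q+1}/(q+1). -/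
/-- If `ω < ω_{p,q}` then `F(u*) > 0` at
`u* = [((p-1)(q+1))/((p+1)(q-1))]^{1/(q-p)}`. -/
theorem F_pos_at_ustar
    (ω p q : ℝ) (hω : 0 < ω) (hp : 1 < p) (hpq : p < q)
    (hlt : ω < (2 * (q - p) / ((p + 1) * (q - 1)))
        * (((p - 1) * (q + 1)) / ((p + 1) * (q - 1))) ^ ((p - 1) / (q - p))) :
    -ω * ((((p - 1) * (q + 1)) / ((p + 1) * (q - 1))) ^ (1 / (q - p))) ^ 2 / 2
      + ((((p - 1) * (q + 1)) / ((p + 1) * (q - 1))) ^ (1 / (q - p))) ^ (p + 1) / (p + 1)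
      - ((((p - 1) * (q + 1)) / ((p + 1) * (q - 1))) ^ (1 / (q - p))) ^ (q + 1) / (q + 1)
      > 0 := by
  set A : ℝ := ((p - 1) * (q + 1)) / ((p + 1) * (q - 1)) with hAdef
  have hA : 0 < A := by
    apply div_pos <;> nlinarith
  set u : ℝ := A ^ (1 / (q - p)) with hudef
  have hu : 0 < u := Real.rpow_pos_of_pos hA _
  have hs : 0 < q - p := by linarith
  have hp1' : (p + 1) ≠ 0 := by positivity
  have hq1' : (q + 1) ≠ 0 := by nlinarith
  have hqm1 : (q - 1) ≠ 0 := by nlinarith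
  have hgen : ∀ r : ℝ, u ^ r = A ^ (r / (q - p)) := by
    intro r
    rw [hudef, ← Real.rpow_mul hA.le]
    congr 1
    field_simp
  have h2 : u ^ (2:ℕ) = u ^ ((2:ℝ)) := by
    rw [← Real.rpow_natCast u 2]; norm_num
  have hp1 : u ^ (p + 1) = u ^ ((2:ℝ)) * u ^ (p - 1) := by
    rw [← Real.rpow_add hu]; ring_nf
  have hq1 : u ^ (q + 1) = u ^ ((2:ℝ)) * u ^ (q - 1) := by
    rw [← Real.rpow_add hu]; ring_nf
  have hqp : u ^ (q - 1) = u ^ (p - 1) * A := by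
    rw [hgen, hgen,
      show (q - 1) / (q - p) = (p - 1) / (q - p) + 1 by field_simp; ring,
      Real.rpow_add hA, Real.rpow_one]
  have hB : u ^ (p - 1) = A ^ ((p - 1) / (q - p)) := hgen _
  set B : ℝ := A ^ ((p - 1) / (q - p)) with hBdef
  have hBpos : 0 < B := Real.rpow_pos_of_pos hA _
  have h2pos : 0 < u ^ ((2:ℝ)) := Real.rpow_pos_of_pos hu _
  rw [h2, hp1, hq1, hqp, hB]
  have hAval : (1 : ℝ) / (p + 1) - A / (q + 1) = (q - p) / ((p + 1) * (q - 1)) := by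
    rw [hAdef]
    field_simp
    ring
  have comb : B / (p + 1) - B * A / (q + 1) = B * ((q - p) / ((p + 1) * (q - 1))) := by
    calc B / (p + 1) - B * A / (q + 1) = B * ((1:ℝ) / (p + 1) - A / (q + 1)) := by ring
    _ = B * ((q - p) / ((p + 1) * (q - 1))) := by rw [hAval]
  have key2 : -ω / 2 + (B / (p + 1) - B * A / (q + 1)) > 0 := by
    rw [comb]
    have heq : 2 * (q - p) / ((p + 1) * (q - 1)) * B
        = 2 * (B * ((q - p) / ((p + 1) * (q - 1)))) := by ring
    rw [heq] at hlt
    linarith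
  have final : -ω * u ^ ((2:ℝ)) / 2 + u ^ ((2:ℝ)) * B / (p + 1) - u ^ ((2:ℝ)) * (B * A) / (q + 1)
      = u ^ ((2:ℝ)) * (-ω / 2 + (B / (p + 1) - B * A / (q + 1))) := by ring
  linarith [final, mul_pos h2pos key2]
end

section
/- Let ω > 0 and q > p > 1 be real numbers. If F(u) > 0 for some u > 0, where F(u) = -ωu²/2 + u^{p+1}/(p+1) - u^{q+1}/(q+1), then ω < ω_{p,q}, where ω_{p,q} = (2(q-p)/((p+1)(q-1))) · [((p-1)(q+1))/((p+1)(q-1))]^{(p-1)/(q-p)}. -/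
/-- If `F(u) > 0` for some `u > 0`, then `ω < ω_{p,q}`. -/
theorem existence_condition_necessity
    (ω p q : ℝ) (hω : 0 < ω) (hp : 1 < p) (hpq : p < q)
    (hF : ∃ u : ℝ, 0 < u ∧
      -ω * u ^ 2 / 2 + u ^ (p + 1) / (p + 1) - u ^ (q + 1) / (q + 1) > 0) :
    ω < (2 * (q - p) / ((p + 1) * (q - 1)))
        * (((p - 1) * (q + 1)) / ((p + 1) * (q - 1))) ^ ((p - 1) / (q - p)) := by
  obtain ⟨u, hu, hFu⟩ := hF
  have hu2 : (0:ℝ) < u ^ 2 := by positivity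
  have hp1 : (0:ℝ) < p + 1 := by linarith
  have hq1 : (0:ℝ) < q + 1 := by linarith
  have hpm : (0:ℝ) < p - 1 := by linarith
  have hqm : (0:ℝ) < q - 1 := by linarith
  have hqp : (0:ℝ) < q - p := by linarith
  set A : ℝ := ((p - 1) * (q + 1)) / ((p + 1) * (q - 1)) with hAdef
  have hApos : 0 < A := by positivity
  set θ : ℝ := (p - 1) / (q - 1) with hθdef
  set c : ℝ := A ^ ((q - 1) / (q - p)) with hcdef
  have hc : 0 < c := Real.rpow_pos_of_pos hApos _
  set B : ℝ := A ^ ((p - 1) / (q - p)) with hBdef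
  have hB : 0 < B := Real.rpow_pos_of_pos hApos _
  set v : ℝ := u ^ (q - 1) with hvdef
  have hv : 0 < v := Real.rpow_pos_of_pos hu _
  -- split powers
  have hsplitp : u ^ (p + 1) = u ^ (p - 1) * u ^ 2 := by
    rw [← Real.rpow_natCast u 2, ← Real.rpow_add hu]; norm_num; ring_nf
  have hsplitq : u ^ (q + 1) = v * u ^ 2 := by
    rw [hvdef, ← Real.rpow_natCast u 2, ← Real.rpow_add hu]; norm_num; ring_nf
  -- step 1: divide F(u) > 0 by u^2/2
  have hFu' : 0 < u ^ 2 * (-ω / 2 + u ^ (p - 1) / (p + 1) - v / (q + 1)) := by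
    rw [hsplitp, hsplitq] at hFu
    have heq : u ^ 2 * (-ω / 2 + u ^ (p - 1) / (p + 1) - v / (q + 1))
        = -ω * u ^ 2 / 2 + u ^ (p - 1) * u ^ 2 / (p + 1) - v * u ^ 2 / (q + 1) := by
      ring
    rw [heq]; exact hFu
  have h1 : ω < 2 * (u ^ (p - 1) / (p + 1) - v / (q + 1)) := by
    nlinarith [hFu', hu2]
  -- step 2: weighted AM-GM
  have hθ0 : 0 ≤ θ := le_of_lt (by positivity)
  have hθ1 : 0 ≤ 1 - θ := by
    rw [hθdef, sub_nonneg, div_le_one hqm]; linarith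
  have hamgm := Real.geom_mean_le_arith_mean2_weighted hθ0 hθ1
    (le_of_lt (div_pos hv hc)) zero_le_one (by ring)
  rw [Real.one_rpow, mul_one] at hamgm
  have hcθpos : 0 < c ^ θ := Real.rpow_pos_of_pos hc _
  have hmul := mul_le_mul_of_nonneg_left hamgm hcθpos.le
  -- identities
  have hq1' : q - 1 ≠ 0 := ne_of_gt hqm
  have hqp' : q - p ≠ 0 := ne_of_gt hqp
  have hcθB : c ^ θ = B := by
    rw [hcdef, hBdef, ← Real.rpow_mul hApos.le]
    congr 1
    rw [hθdef]
    field_simp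
  have hlhs : c ^ θ * (v / c) ^ θ = u ^ (p - 1) := by
    rw [Real.div_rpow hv.le hc.le, mul_div_cancel₀ _ (ne_of_gt hcθpos)]
    rw [hvdef, ← Real.rpow_mul hu.le]
    congr 1
    rw [hθdef]
    field_simp
  have hcc : c ^ θ / c = A⁻¹ := by
    rw [← Real.rpow_sub_one hc.ne', hcdef, ← Real.rpow_mul hApos.le, ← Real.rpow_neg_one A]
    congr 1
    rw [hθdef]
    field_simp
    ring
  have h2 : u ^ (p - 1) ≤ θ * A⁻¹ * v + (1 - θ) * B := by
    calc u ^ (p - 1) = c ^ θ * (v / c) ^ θ := hlhs.symm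
      _ ≤ c ^ θ * (θ * (v / c) + (1 - θ) * 1) := hmul
      _ = θ * (c ^ θ / c) * v + (1 - θ) * c ^ θ := by ring
      _ = θ * A⁻¹ * v + (1 - θ) * B := by rw [hcc, hcθB]
  -- the coefficient identities
  have hθA : θ * A⁻¹ = (p + 1) / (q + 1) := by
    rw [hθdef, hAdef]
    field_simp
  have hθ2 : 1 - θ = (q - p) / (q - 1) := by
    rw [hθdef]; field_simp; ring
  rw [hθA, hθ2] at h2
  -- combine
  have h3 : 2 * (u ^ (p - 1) / (p + 1) - v / (q + 1))
      ≤ 2 * (q - p) / ((p + 1) * (q - 1)) * B := by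
    have : u ^ (p - 1) / (p + 1) ≤ ((p + 1) / (q + 1) * v + (q - p) / (q - 1) * B) / (p + 1) :=
      div_le_div_of_nonneg_right h2 hp1.le
    have heq2 : ((p + 1) / (q + 1) * v + (q - p) / (q - 1) * B) / (p + 1)
        = v / (q + 1) + (q - p) / ((p + 1) * (q - 1)) * B := by
      field_simp
    rw [heq2] at this
    rw [show 2 * (q - p) / ((p + 1) * (q - 1)) * B
        = 2 * ((q - p) / ((p + 1) * (q - 1)) * B) from by ring]
    linarith
  calc ω < 2 * (u ^ (p - 1) / (p + 1) - v / (q + 1)) := h1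
    _ ≤ 2 * (q - p) / ((p + 1) * (q - 1)) * B := h3
    _ = (2 * (q - p) / ((p + 1) * (q - 1))) * A ^ ((p - 1) / (q - p)) := by rw [hBdef]
end

section
/- Let ω > 0 and q > p > 1 be real numbers with ω < η_{p,q}, where η_{p,q} = ((q-p)/(q-1)) · [(p-1)/(q-1)]^{(p-1)/(q-p)}. Then for every u > 0, f̃(u) < 0, where f̃(u) = (f'(u) + u f''(u)) f(u) - u f'(u)² with f(u) = -ωu + u^p - u^q, f'(u) = -ω + p u^{p-1} - q u^{q-1}, and f''(u) = p(p-1) u^{p-2} - q(q-1) u^{q-2}. -/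
set_option maxHeartbeats 800000

/-- If `ω < η_{p,q}` then `f̃(u) < 0` for all `u > 0`. -/
theorem uniqueness_condition_sufficiency
    (ω p q : ℝ) (hω : 0 < ω) (hp : 1 < p) (hpq : p < q)
    (hlt : ω < ((q - p) / (q - 1)) * ((p - 1) / (q - 1)) ^ ((p - 1) / (q - p))) :
    ∀ u : ℝ, 0 < u →
      ((-ω + p * u ^ (p - 1) - q * u ^ (q - 1))
          + u * (p * (p - 1) * u ^ (p - 2) - q * (q - 1) * u ^ (q - 2)))
        * (-ω * u + u ^ p - u ^ q)
      - u * (-ω + p * u ^ (p - 1) - q * u ^ (q - 1)) ^ 2 < 0 := by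
  intro u hu
  have hp1 : (0:ℝ) < p - 1 := by linarith
  have hq1 : (0:ℝ) < q - 1 := by linarith
  have hqp : (0:ℝ) < q - p := by linarith
  set a := u ^ (p - 1) with ha
  set b := u ^ (q - 1) with hb
  have hapos : 0 < a := Real.rpow_pos_of_pos hu _
  have hbpos : 0 < b := Real.rpow_pos_of_pos hu _
  -- basic rpow identities
  have hup : u ^ p = u * a := by
    rw [ha, show p = 1 + (p - 1) by ring, Real.rpow_add hu, Real.rpow_one]
    ring_nf
  have huq : u ^ q = u * b := by
    rw [hb, show q = 1 + (q - 1) by ring, Real.rpow_add hu, Real.rpow_one]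
    ring_nf
  have hup2 : u ^ (p - 2) = a / u := by
    rw [eq_div_iff hu.ne', ha, show p - 1 = (p - 2) + 1 by ring, Real.rpow_add hu,
      Real.rpow_one]
  have huq2 : u ^ (q - 2) = b / u := by
    rw [eq_div_iff hu.ne', hb, show q - 1 = (q - 2) + 1 by ring, Real.rpow_add hu,
      Real.rpow_one]
  have hba : b = a * u ^ (q - p) := by
    rw [ha, hb, ← Real.rpow_add hu]
    ring_nf
  -- the key inequality : ω(q-1)² u^{q-p} < ω(p-1)² + (q-p)² b
  set c : ℝ := (q - p) / (ω * (q - 1)) with hc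
  have hcpos : 0 < c := by positivity
  set e : ℝ := (q - p) / (p - 1) with he
  have hepos : 0 < e := by positivity
  set w₁ : ℝ := (p - 1) / (q - 1) with hw1
  set w₂ : ℝ := (q - p) / (q - 1) with hw2
  have hw1pos : 0 < w₁ := by positivity
  have hw2pos : 0 < w₂ := by positivity
  have hwsum : w₁ + w₂ = 1 := by
    rw [hw1, hw2]; field_simp; ring
  have hgm := Real.geom_mean_le_arith_mean2_weighted hw1pos.le hw2pos.le
    (Real.rpow_nonneg hcpos.le (-e)) (by positivity : (0:ℝ) ≤ c * b) hwsum
  -- simplify the geometric mean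
  have hgmval : (c ^ (-e)) ^ w₁ * (c * b) ^ w₂ = u ^ (q - p) := by
    have h1 : -e * w₁ + w₂ = 0 := by
      rw [he, hw1, hw2]; field_simp; ring
    have h2 : (q - 1) * w₂ = q - p := by
      rw [hw2]; field_simp
    rw [Real.mul_rpow hcpos.le hbpos.le]
    rw [← Real.rpow_mul hcpos.le]
    rw [← mul_assoc]
    rw [← Real.rpow_add hcpos]
    rw [h1]
    rw [Real.rpow_zero]
    rw [one_mul]
    rw [hb]
    rw [← Real.rpow_mul hu.le]
    rw [h2]
  rw [hgmval] at hgm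
  -- bound the constant term strictly
  have hconst : ω * (q - 1) ^ 2 * w₁ * c ^ (-e) < ω * (p - 1) ^ 2 := by
    have hxD : ω * (q - 1) / (q - p) < w₁ ^ ((p - 1) / (q - p)) := by
      rw [div_lt_iff₀ hqp]
      calc ω * (q - 1) < w₂ * w₁ ^ ((p - 1) / (q - p)) * (q - 1) :=
            mul_lt_mul_of_pos_right hlt hq1
        _ = w₁ ^ ((p - 1) / (q - p)) * (q - p) := by rw [hw2]; field_simp
    have hcinv : c⁻¹ = ω * (q - 1) / (q - p) := by
      rw [hc]; field_simp
    have hkey : (c⁻¹) ^ e < w₁ := by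
      have h1 : (c⁻¹) ^ e < (w₁ ^ ((p - 1) / (q - p))) ^ e := by
        apply Real.rpow_lt_rpow (by positivity) _ hepos
        rw [hcinv]; exact hxD
      have h2 : (w₁ ^ ((p - 1) / (q - p))) ^ e = w₁ := by
        rw [← Real.rpow_mul hw1pos.le]
        have : (p - 1) / (q - p) * e = 1 := by rw [he]; field_simp
        rw [this, Real.rpow_one]
      rwa [h2] at h1
    have hce : c ^ (-e) = (c⁻¹) ^ e := by
      rw [← Real.rpow_neg_one c, ← Real.rpow_mul hcpos.le]
      ring_nf
    rw [hce]
    calc ω * (q - 1) ^ 2 * w₁ * (c⁻¹) ^ e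
        = (ω * (q - 1) * (p - 1)) * (c⁻¹) ^ e := by rw [hw1]; field_simp
      _ < (ω * (q - 1) * (p - 1)) * w₁ := by
          exact mul_lt_mul_of_pos_left hkey (by positivity)
      _ = ω * (p - 1) ^ 2 := by rw [hw1]; field_simp
  have hcoef : ω * (q - 1) ^ 2 * (w₂ * (c * b)) = (q - p) ^ 2 * b := by
    rw [hw2, hc]; field_simp
  have hkeyineq : ω * (q - 1) ^ 2 * u ^ (q - p) < ω * (p - 1) ^ 2 + (q - p) ^ 2 * b := by
    have hmul := mul_le_mul_of_nonneg_left hgm (by positivity : (0:ℝ) ≤ ω * (q - 1) ^ 2)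
    calc ω * (q - 1) ^ 2 * u ^ (q - p)
        ≤ ω * (q - 1) ^ 2 * (w₁ * c ^ (-e) + w₂ * (c * b)) := hmul
      _ = ω * (q - 1) ^ 2 * w₁ * c ^ (-e) + ω * (q - 1) ^ 2 * (w₂ * (c * b)) := by ring
      _ < ω * (p - 1) ^ 2 + (q - p) ^ 2 * b := by rw [hcoef]; linarith
  -- multiply by a and conclude
  have hkey2 : ω * (q - 1) ^ 2 * b - ω * (p - 1) ^ 2 * a - (q - p) ^ 2 * (a * b) < 0 := by
    have h := mul_lt_mul_of_pos_left hkeyineq hapos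
    have h2 : a * (ω * (q - 1) ^ 2 * u ^ (q - p)) = ω * (q - 1) ^ 2 * b := by
      rw [hba]; ring
    have h3 : a * (ω * (p - 1) ^ 2 + (q - p) ^ 2 * b)
        = ω * (p - 1) ^ 2 * a + (q - p) ^ 2 * (a * b) := by ring
    rw [h2, h3] at h
    linarith
  have hid : ((-ω + p * u ^ (p - 1) - q * u ^ (q - 1))
          + u * (p * (p - 1) * u ^ (p - 2) - q * (q - 1) * u ^ (q - 2)))
        * (-ω * u + u ^ p - u ^ q)
      - u * (-ω + p * u ^ (p - 1) - q * u ^ (q - 1)) ^ 2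
      = u * (ω * (q - 1) ^ 2 * b - ω * (p - 1) ^ 2 * a - (q - p) ^ 2 * (a * b)) := by
    rw [hup, huq, hup2, huq2, ← ha, ← hb]
    field_simp
    ring
  rw [hid]
  exact mul_neg_of_pos_of_neg hu hkey2
end

section
/- Let ω > 0 and q > p > 1 be real numbers. If f̃(u) < 0 for every u > 0, where f̃(u) = (f'(u) + u f''(u)) f(u) - u f'(u)² with f(u) = -ωu + u^p - u^q, f'(u) = -ω + p u^{p-1} - q u^{q-1}, and f''(u) = p(p-1) u^{p-2} - q(q-1) u^{q-2}, then ω < η_{p,q}, where η_{p,q} = ((q-p)/(q-1)) · [(p-1)/(q-1)]^{(p-1)/(q-p)}. -/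
/-- If `f̃(u) < 0` for all `u > 0`, then `ω < η_{p,q}`. -/
theorem uniqueness_condition_necessity
    (ω p q : ℝ) (hω : 0 < ω) (hp : 1 < p) (hpq : p < q)
    (hf : ∀ u : ℝ, 0 < u →
      ((-ω + p * u ^ (p - 1) - q * u ^ (q - 1))
          + u * (p * (p - 1) * u ^ (p - 2) - q * (q - 1) * u ^ (q - 2)))
        * (-ω * u + u ^ p - u ^ q)
      - u * (-ω + p * u ^ (p - 1) - q * u ^ (q - 1)) ^ 2 < 0) :
    ω < ((q - p) / (q - 1)) * ((p - 1) / (q - 1)) ^ ((p - 1) / (q - p)) := by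
  have hp1 : (0:ℝ) < p - 1 := by linarith
  have hq1 : (0:ℝ) < q - 1 := by linarith
  have hqp : (0:ℝ) < q - p := by linarith
  set r : ℝ := (p - 1) / (q - 1) with hr
  have hr0 : 0 < r := div_pos hp1 hq1
  set u : ℝ := r ^ ((q - p)⁻¹) with hudef
  have hu : 0 < u := Real.rpow_pos_of_pos hr0 _
  -- key power identities
  have hBval : u ^ (p - 1) = r ^ ((p - 1) / (q - p)) := by
    rw [hudef, ← Real.rpow_mul hr0.le]
    congr 1
    field_simp
  have hqpr : u ^ (q - p) = r := by
    rw [hudef, ← Real.rpow_mul hr0.le, inv_mul_cancel₀ hqp.ne', Real.rpow_one]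
  have hc : u ^ (q - 1) = u ^ (p - 1) * r := by
    rw [← hqpr, ← Real.rpow_add hu]
    congr 1; ring
  have hup : u ^ p = u * u ^ (p - 1) := by
    nth_rewrite 2 [← Real.rpow_one u]
    rw [← Real.rpow_add hu]
    congr 1; ring
  have huq : u ^ q = u * (u ^ (p - 1) * r) := by
    rw [← hc]
    nth_rewrite 2 [← Real.rpow_one u]
    rw [← Real.rpow_add hu]
    congr 1; ring
  have hp2 : u ^ (p - 2) = u ^ (p - 1) / u := by
    rw [eq_div_iff hu.ne']
    nth_rewrite 2 [← Real.rpow_one u]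
    rw [← Real.rpow_add hu]
    congr 1; ring
  have hq2 : u ^ (q - 2) = u ^ (p - 1) * r / u := by
    rw [← hc, eq_div_iff hu.ne']
    nth_rewrite 2 [← Real.rpow_one u]
    rw [← Real.rpow_add hu]
    congr 1; ring
  have hE := hf u hu
  rw [hup, huq, hp2, hq2, hc] at hE
  set B : ℝ := u ^ (p - 1) with hB
  have hB0 : 0 < B := Real.rpow_pos_of_pos hu _
  have hid : ((-ω + p * B - q * (B * r))
          + u * (p * (p - 1) * (B / u) - q * (q - 1) * (B * r / u)))
        * (-ω * u + u * B - u * (B * r))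
      - u * (-ω + p * B - q * (B * r)) ^ 2
      = u * B * (p - 1) * (p - q) * ((B * (q - p) - ω * (q - 1)) / (q - 1)) := by
    rw [hr]
    field_simp
    ring
  rw [hid] at hE
  have hpre : 0 < u * B * (p - 1) := by positivity
  have hA : 0 < (B * (q - p) - ω * (q - 1)) / (q - 1) := by
    by_contra h
    push_neg at h
    nlinarith [mul_nonneg (mul_nonneg hpre.le hqp.le) (neg_nonneg.mpr h)]
  have hnum : 0 < B * (q - p) - ω * (q - 1) := by
    have := (div_pos_iff.mp hA)
    rcases this with ⟨h1, _⟩ | ⟨_, h2⟩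
    · exact h1
    · linarith
  rw [← hBval]
  rw [div_mul_eq_mul_div, lt_div_iff₀ hq1]
  linarith
end

section
/- Let q > p > 1 be real numbers. Then ω_{p,q} < η_{p,q}, where ω_{p,q} = (2(q-p)/((p+1)(q-1))) · [((p-1)(q+1))/((p+1)(q-1))]^{(p-1)/(q-p)} and η_{p,q} = ((q-p)/(q-1)) · [(p-1)/(q-1)]^{(p-1)/(q-p)}. -/
/-- `ω_{p,q} < η_{p,q}` for `q > p > 1`. -/
theorem omega_lt_eta
    (p q : ℝ) (hp : 1 < p) (hpq : p < q) :
    (2 * (q - p) / ((p + 1) * (q - 1)))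
        * (((p - 1) * (q + 1)) / ((p + 1) * (q - 1))) ^ ((p - 1) / (q - p))
      < ((q - p) / (q - 1)) * ((p - 1) / (q - 1)) ^ ((p - 1) / (q - p)) := by
  have hq : 1 < q := hp.trans hpq
  have hp1 : (0:ℝ) < p - 1 := by linarith
  have hq1 : (0:ℝ) < q - 1 := by linarith
  have hqp : (0:ℝ) < q - p := by linarith
  have hp1' : (0:ℝ) < p + 1 := by linarith
  have hq1' : (0:ℝ) < q + 1 := by linarith
  set r : ℝ := (p - 1) / (q - p) with hr_def
  have hr : 0 < r := div_pos hp1 hqp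
  set A : ℝ := (q + 1) / (p + 1) with hA_def
  have hA1 : 1 < A := (one_lt_div hp1').mpr (by linarith)
  have hA0 : 0 < A := lt_trans one_pos hA1
  -- key : A ^ r < (p+1)/2
  have hkey : A ^ r < (p + 1) / 2 := by
    have hlogA : Real.log A < A - 1 :=
      Real.log_lt_sub_one_of_pos hA0 (ne_of_gt hA1)
    have hAr : A ^ r > 0 := Real.rpow_pos_of_pos hA0 r
    have h1 : Real.log (A ^ r) < (p - 1) / (p + 1) := by
      rw [Real.log_rpow hA0]
      have hA1' : A - 1 = (q - p) / (p + 1) := by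
        field_simp [hA_def]
        rw [hA_def, sub_mul, div_mul_cancel₀ _ (ne_of_gt hp1')]; ring
      have : r * Real.log A < r * (A - 1) :=
        (mul_lt_mul_iff_right₀ hr).mpr hlogA
      calc r * Real.log A < r * (A - 1) := this
        _ = (p - 1) / (p + 1) := by
            rw [hA1', hr_def]; field_simp
    have h2 : (p - 1) / (p + 1) < Real.log ((p + 1) / 2) := by
      have h2' : (0:ℝ) < 2 / (p + 1) := by positivity
      have hne : (2:ℝ) / (p + 1) ≠ 1 := by
        intro h
        have : (2:ℝ) = p + 1 := by
          field_simp at h; linarith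
        linarith
      have := Real.log_lt_sub_one_of_pos h2' hne
      rw [Real.log_div (by norm_num) (ne_of_gt hp1')] at this
      have hlog : Real.log ((p + 1) / 2) = Real.log (p + 1) - Real.log 2 := by
        rw [Real.log_div (ne_of_gt hp1') (by norm_num)]
      rw [hlog]
      have hineq : (p - 1) / (p + 1) = 1 - 2 / (p + 1) := by
        field_simp; ring
      rw [hineq]
      linarith
    have := h1.trans h2
    have hp2 : (0:ℝ) < (p + 1) / 2 := by positivity
    exact (Real.log_lt_log_iff hAr hp2).mp this
  -- split the power
  have hsplit : (((p - 1) * (q + 1)) / ((p + 1) * (q - 1))) ^ r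
      = ((p - 1) / (q - 1)) ^ r * A ^ r := by
    rw [← Real.mul_rpow (by positivity) (le_of_lt hA0)]
    congr 1
    field_simp [hA_def]
    ring
    rw [show p * A + A = (q + 1) / (p + 1) * (p + 1) by ring, div_mul_cancel₀ _ (ne_of_gt hp1')]; ring
  rw [hsplit]
  have hB : 0 < ((p - 1) / (q - 1)) ^ r := Real.rpow_pos_of_pos (by positivity) r
  have hcoeff : 2 * (q - p) / ((p + 1) * (q - 1)) * A ^ r < (q - p) / (q - 1) := by
    have h3 : 2 * (q - p) / ((p + 1) * (q - 1)) = (q - p) / (q - 1) * (2 / (p + 1)) := by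
      field_simp
    rw [h3]
    have hη : (0:ℝ) < (q - p) / (q - 1) := by positivity
    have : 2 / (p + 1) * A ^ r < 1 := by
      rw [div_mul_eq_mul_div, div_lt_one hp1']
      calc 2 * A ^ r < 2 * ((p + 1) / 2) :=
            (mul_lt_mul_iff_right₀ (by norm_num)).mpr hkey
        _ = p + 1 := by ring
    calc (q - p) / (q - 1) * (2 / (p + 1)) * A ^ r
        = (q - p) / (q - 1) * (2 / (p + 1) * A ^ r) := by ring
      _ < (q - p) / (q - 1) * 1 := (mul_lt_mul_iff_right₀ hη).mpr this
      _ = (q - p) / (q - 1) := by ring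
  calc 2 * (q - p) / ((p + 1) * (q - 1)) * (((p - 1) / (q - 1)) ^ r * A ^ r)
      = (2 * (q - p) / ((p + 1) * (q - 1)) * A ^ r) * ((p - 1) / (q - 1)) ^ r := by ring
    _ < (q - p) / (q - 1) * ((p - 1) / (q - 1)) ^ r :=
        (mul_lt_mul_iff_left₀ hB).mpr hcoeff
end
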